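/- The two-sided representation solves the chain equation (Lemma B.1, point 3): Let Z : Q → [0,∞] and define V : Q → [0,∞] by V(p,k) = Σ_{p'∈P} Σ_{k'∈D_{p'}, k' ≤ k} c(p,k;p',k') Z(p',k') (a sum in [0,∞]). Then for every (p,k) ∈ Q, V(p,k) = Z(p,k) + Σ_{p'∈P} Σ_{k'∈D_{p'}, k' < k} a^p_{p'} h^p_{p'}(k−k') V(p',k'), an identity in [0,∞]. -/

import Mathlib

/-!
Split off the diagonal term `k' = k` of `V(p,k)`, where `c(p,k;p',k) = 1` exactly for `p' = p`.
In the remaining sum over `k' < k` expand `c(p,k;p',k')` by its recursion. Everything lives in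
`[0,∞]`, so the sums over `p', k', p'', k''` may be reordered freely; summing first over
`k' ≤ k''` reassembles `V(p'',k'')`.
-/

open scoped BigOperators ENNReal
open Set

theorem ENNReal.ofReal_finsum_mem {α : Type*} {s : Set α} (hs : s.Finite) {f : α → ℝ}
    (hf : ∀ x ∈ s, 0 ≤ f x) :
    ENNReal.ofReal (∑ᶠ x ∈ s, f x) = ∑' x : s, ENNReal.ofReal (f x) := by
  have := hs.to_subtype
  rw [← finsum_set_coe_eq_finsum_mem, ← tsum_eq_finsum (L := .unconditional _) (Set.toFinite _),
    ENNReal.ofReal_tsum_of_nonneg (fun x : s => hf x x.2) Summable.of_finite]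

theorem ENNReal.tsum_inter_Iic {α : Type*} [LinearOrder α] (S : Set α) (f : α → ℝ≥0∞) (k : α) :
    ∑' x : ↥(S ∩ Iic k), f x = S.indicator f k + ∑' x : ↥(S ∩ Iio k), f x := by
  rw [← Iio_insert]
  by_cases hk : k ∈ S
  · rw [inter_insert_of_mem hk, insert_eq, ENNReal.summable.tsum_union_disjoint
      (by simp) ENNReal.summable, tsum_singleton, indicator_of_mem hk]
  · rw [inter_insert_of_notMem hk, indicator_of_notMem hk, zero_add]

open Classical in
theorem ENNReal.tsum_subtype_tsum_subtype {α β : Type*} (s : Set α) (t : α → Set β)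
    (F : α → β → ℝ≥0∞) :
    ∑' x : s, ∑' y : t x, F x y = ∑' x, ∑' y, if x ∈ s ∧ y ∈ t x then F x y else 0 := by
  rw [tsum_subtype s fun x => ∑' y : t x, F x y]
  refine tsum_congr fun x => ?_
  by_cases hx : x ∈ s <;> simp [hx, tsum_subtype, indicator_apply]

theorem ENNReal.tsum_Iio_tsum_Ico_comm {α : Type*} [LinearOrder α] (A B : Set α) (k : α)
    (F : α → α → ℝ≥0∞) :
    ∑' x : ↥(A ∩ Iio k), ∑' y : ↥(B ∩ Ico (x : α) k), F x y
      = ∑' y : ↥(B ∩ Iio k), ∑' x : ↥(A ∩ Iic (y : α)), F x y := by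
  refine (tsum_subtype_tsum_subtype _ (fun x => B ∩ Ico x k) F).trans <|
    .trans ?_ (tsum_subtype_tsum_subtype _ (fun y => A ∩ Iic y) (flip F)).symm
  rw [ENNReal.tsum_comm]
  refine tsum_congr fun y => tsum_congr fun x => ?_
  congr 1
  apply propext
  simp only [mem_inter_iff, mem_Iio, mem_Ico, mem_Iic]
  constructor
  · rintro ⟨⟨hA, -⟩, hB, hxy, hy⟩
    exact ⟨⟨hB, hy⟩, hA, hxy⟩
  · rintro ⟨⟨hB, hy⟩, hA, hxy⟩
    exact ⟨⟨hA, hxy.trans_lt hy⟩, hB, hxy, hy⟩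

theorem finite_inter_Ico_of_forall_finite_inter_Ioc {ι : Type*} {D : ι → Set ℝ}
    (hfin : ∀ u v : ℝ, u < v → ((⋃ i, D i) ∩ Ioc u v).Finite) (i : ι) {u v : ℝ} (huv : u < v) :
    (D i ∩ Ico u v).Finite :=
  (hfin (u - 1) v (by linarith)).subset fun _ ⟨hx, hxu, hxv⟩ =>
    ⟨mem_iUnion.2 ⟨i, hx⟩, by linarith, hxv.le⟩

theorem ofReal_coeff_eq_sum {P : Type*} [Fintype P] {D : P → Set ℝ}
    (hfin : ∀ u v : ℝ, u < v → ((⋃ p, D p) ∩ Ioc u v).Finite)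
    {a : P → P → ℝ} (ha : ∀ p p', 0 ≤ a p p') {h : P → P → ℝ → ℝ} (hh : ∀ p p' x, 0 ≤ h p p' x)
    {co : P → ℝ → P → ℝ → ℝ}
    (hco_nonneg : ∀ p k p' k', k ∈ D p → k' ∈ D p' → k' ≤ k → 0 ≤ co p k p' k')
    (hco_rec : ∀ p k p' k', k ∈ D p → k' ∈ D p' → k' < k →
      co p k p' k' = ∑ p'' : P, ∑ᶠ k'' ∈ D p'' ∩ Ico k' k,
        a p p'' * h p p'' (k - k'') * co p'' k'' p' k')
    {p p' : P} {k k' : ℝ} (hk : k ∈ D p) (hk' : k' ∈ D p') (hlt : k' < k) :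
    ENNReal.ofReal (co p k p' k') = ∑ p'' : P, ∑' k'' : ↥(D p'' ∩ Ico k' k),
      ENNReal.ofReal (a p p'' * h p p'' (k - k'')) * ENNReal.ofReal (co p'' k'' p' k') := by
  have hterm : ∀ p'', ∀ k'' ∈ D p'' ∩ Ico k' k,
      0 ≤ a p p'' * h p p'' (k - k'') * co p'' k'' p' k' :=
    fun p'' k'' hk'' => mul_nonneg (mul_nonneg (ha _ _) (hh _ _ _))
      (hco_nonneg _ _ _ _ hk''.1 hk' hk''.2.1)
  rw [hco_rec p k p' k' hk hk' hlt, ENNReal.ofReal_sum_of_nonneg fun p'' _ =>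
    finsum_nonneg fun k'' => finsum_nonneg (hterm p'' k'')]
  refine Finset.sum_congr rfl fun p'' _ => ?_
  rw [ENNReal.ofReal_finsum_mem (finite_inter_Ico_of_forall_finite_inter_Ioc hfin p'' hlt)
    (hterm p'')]
  exact tsum_congr fun k'' => ENNReal.ofReal_mul (mul_nonneg (ha _ _) (hh _ _ _))

theorem sum_indicator_coeff_mul_eq {P : Type*} [Fintype P] [DecidableEq P] {D : P → Set ℝ}
    {co : P → ℝ → P → ℝ → ℝ}
    (hco_diag : ∀ p p' k, k ∈ D p → k ∈ D p' → co p k p' k = if p = p' then 1 else 0)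
    (Z : P → ℝ → ℝ≥0∞) {p : P} {k : ℝ} (hk : k ∈ D p) :
    ∑ p', (D p').indicator (fun k' => ENNReal.ofReal (co p k p' k') * Z p' k') k = Z p k := by
  rw [Finset.sum_eq_single_of_mem p (Finset.mem_univ p), indicator_of_mem hk,
    hco_diag p p k hk hk, if_pos rfl, ENNReal.ofReal_one, one_mul]
  intro p' _ hp'
  by_cases hkp' : k ∈ D p'
  · rw [indicator_of_mem hkp', hco_diag p p' k hk hkp', if_neg hp'.symm, ENNReal.ofReal_zero,
      zero_mul]
  · exact indicator_of_notMem hkp' _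

theorem stmt_6_general
    {P : Type*} [Fintype P] [DecidableEq P]
    (D : P → Set ℝ)
    (hfin : ∀ u v : ℝ, u < v → ((⋃ p, D p) ∩ Set.Ioc u v).Finite)
    (a : P → P → ℝ) (ha : ∀ p p', 0 ≤ a p p')
    (h : P → P → ℝ → ℝ) (hh : ∀ p p' x, 0 ≤ h p p' x)
    -- the coefficients `c(p,k;p',k')`, characterized by the well-founded recursion
    (co : P → ℝ → P → ℝ → ℝ)
    (hco_nonneg : ∀ p k p' k', k ∈ D p → k' ∈ D p' → k' ≤ k → 0 ≤ co p k p' k')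
    (hco_diag : ∀ p p' k, k ∈ D p → k ∈ D p' → co p k p' k = if p = p' then 1 else 0)
    (hco_rec : ∀ p k p' k', k ∈ D p → k' ∈ D p' → k' < k →
      co p k p' k' = ∑ p'' : P, ∑ᶠ k'' ∈ D p'' ∩ Set.Ico k' k,
        a p p'' * h p p'' (k - k'') * co p'' k'' p' k')
    -- `Z : Q → [0,∞]` and `V` its two-sided representation via the coefficients
    (Z V : P → ℝ → ℝ≥0∞)
    (hVdef : ∀ (p : P) (k : ℝ), k ∈ D p →
      V p k = ∑ p' : P, ∑' k' : (D p' ∩ Set.Iic k : Set ℝ),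
        ENNReal.ofReal (co p k p' (k' : ℝ)) * Z p' (k' : ℝ)) :
    ∀ (p : P) (k : ℝ), k ∈ D p →
      V p k = Z p k + ∑ p' : P, ∑' k' : (D p' ∩ Set.Iio k : Set ℝ),
        ENNReal.ofReal (a p p' * h p p' (k - (k' : ℝ))) * V p' (k' : ℝ) := by
  intro p k hk
  calc V p k
      = Z p k + ∑ p', ∑' k' : ↥(D p' ∩ Iio k), ENNReal.ofReal (co p k p' k') * Z p' k' := by
        rw [hVdef p k hk, ← sum_indicator_coeff_mul_eq hco_diag Z hk, ← Finset.sum_add_distrib]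
        exact Finset.sum_congr rfl fun p' _ => ENNReal.tsum_inter_Iic (D p')
          (fun k' => ENNReal.ofReal (co p k p' k') * Z p' k') k
    _ = Z p k + ∑ p', ∑' k' : ↥(D p' ∩ Iio k), ∑ p'', ∑' k'' : ↥(D p'' ∩ Ico (k' : ℝ) k),
          ENNReal.ofReal (a p p'' * h p p'' (k - k'')) *
            (ENNReal.ofReal (co p'' k'' p' k') * Z p' k') := by
        congr 1
        refine Finset.sum_congr rfl fun p' _ => tsum_congr fun k' => ?_
        rw [ofReal_coeff_eq_sum hfin ha hh hco_nonneg hco_rec hk k'.2.1 k'.2.2, Finset.sum_mul]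
        simp only [← ENNReal.tsum_mul_right, mul_assoc]
    _ = Z p k + ∑ p'', ∑ p', ∑' k'' : ↥(D p'' ∩ Iio k), ∑' k' : ↥(D p' ∩ Iic (k'' : ℝ)),
          ENNReal.ofReal (a p p'' * h p p'' (k - k'')) *
            (ENNReal.ofReal (co p'' k'' p' k') * Z p' k') := by
        simp only [Summable.tsum_finsetSum fun _ _ => ENNReal.summable]
        rw [Finset.sum_comm]
        exact congrArg _ <| Finset.sum_congr rfl fun p'' _ => Finset.sum_congr rfl fun p' _ =>
          ENNReal.tsum_Iio_tsum_Ico_comm (D p') (D p'') k fun k' k'' =>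
            ENNReal.ofReal (a p p'' * h p p'' (k - k'')) *
              (ENNReal.ofReal (co p'' k'' p' k') * Z p' k')
    _ = _ := by
        congr 1
        refine Finset.sum_congr rfl fun p'' _ => ?_
        rw [← Summable.tsum_finsetSum fun _ _ => ENNReal.summable]
        refine tsum_congr fun k'' => ?_
        simp only [hVdef p'' k'' k''.2.1, Finset.mul_sum, ENNReal.tsum_mul_left]

/-- **Lemma B.1, point 3.**
The two-sided representation solves the chain equation. -/
theorem stmt_6
    {P : Type*} [Fintype P] [Nonempty P] [DecidableEq P]
    (n : P → ℕ) (hn : ∀ p, 1 ≤ n p)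
    (θ : P → ℝ) (hθ0 : ∀ p, 0 ≤ θ p) (hθ1 : ∀ p, θ p < 1 / (n p : ℝ))
    (D : P → Set ℝ)
    (hD : ∀ p, D p = {k : ℝ | ∃ j : ℤ, k = θ p + (j : ℝ) / (n p : ℝ)})
    (hfin : ∀ u v : ℝ, u < v → ((⋃ p, D p) ∩ Set.Ioc u v).Finite)
    (a : P → P → ℝ) (ha : ∀ p p', 0 ≤ a p p')
    (h : P → P → ℝ → ℝ) (hh : ∀ p p' x, 0 ≤ h p p' x)
    (hh0 : ∀ p p' x, x ≤ 0 → h p p' x = 0)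
    -- the coefficients `c(p,k;p',k')`, characterized by the well-founded recursion
    (co : P → ℝ → P → ℝ → ℝ)
    (hco_nonneg : ∀ p k p' k', k ∈ D p → k' ∈ D p' → k' ≤ k → 0 ≤ co p k p' k')
    (hco_diag : ∀ p p' k, k ∈ D p → k ∈ D p' → co p k p' k = if p = p' then 1 else 0)
    (hco_rec : ∀ p k p' k', k ∈ D p → k' ∈ D p' → k' < k →
      co p k p' k' = ∑ p'' : P, ∑ᶠ k'' ∈ D p'' ∩ Set.Ico k' k,
        a p p'' * h p p'' (k - k'') * co p'' k'' p' k')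
    -- `Z : Q → [0,∞]` and `V` its two-sided representation via the coefficients
    (Z V : P → ℝ → ℝ≥0∞)
    (hVdef : ∀ (p : P) (k : ℝ), k ∈ D p →
      V p k = ∑ p' : P, ∑' k' : (D p' ∩ Set.Iic k : Set ℝ),
        ENNReal.ofReal (co p k p' (k' : ℝ)) * Z p' (k' : ℝ)) :
    ∀ (p : P) (k : ℝ), k ∈ D p →
      V p k = Z p k + ∑ p' : P, ∑' k' : (D p' ∩ Set.Iio k : Set ℝ),
        ENNReal.ofReal (a p p' * h p p' (k - (k' : ℝ))) * V p' (k' : ℝ) :=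
  stmt_6_general D hfin a ha h hh co hco_nonneg hco_diag hco_rec Z V hVdef
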